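/- arXiv:1411.0074 — 3 statements merged into one kernel-verified Lean document; each statement's English description precedes it below -/
import Mathlib

section
/- Suppose α + β ≤ 1/(n−1). Then for every realization of the disjoint neighbor sets N_i^+(t), N_i^-(t) ⊆ V \ {i} and attention values B_t, D_t ∈ {0,1}, one step of the state-flipping update satisfies M(t+1) ≤ M(t); that is, the maximum absolute state is non-expansive. -/
/-!
Rewrite the update of node `i` as
`s'ᵢ = (1 - αB·|N⁺ᵢ| - βD·|N⁻ᵢ|) sᵢ + αB ∑_{N⁺ᵢ} sⱼ - βD ∑_{N⁻ᵢ} sⱼ`.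
Since `N⁺ᵢ` and `N⁻ᵢ` are disjoint subsets of `V \ {i}`, `|N⁺ᵢ| + |N⁻ᵢ| ≤ n - 1`, so the
condition `α + β ≤ 1/(n-1)` makes all coefficients nonnegative with total mass
`(1 - αB|N⁺ᵢ| - βD|N⁻ᵢ|) + αB|N⁺ᵢ| + βD|N⁻ᵢ| = 1`. Hence `|s'ᵢ|` is at most a convex
combination of values `|sⱼ| ≤ M`.
-/

open Finset

/-- The maximum absolute state `M = max_{i ∈ V} |x i|`. -/
noncomputable def Mmax {n : ℕ} (hn : 3 ≤ n) (x : Fin n → ℝ) : ℝ :=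
  Finset.univ.sup' ⟨⟨0, by omega⟩, Finset.mem_univ _⟩ fun i => |x i|

lemma abs_le_Mmax {n : ℕ} (hn : 3 ≤ n) (x : Fin n → ℝ) (i : Fin n) : |x i| ≤ Mmax hn x :=
  le_sup' (fun i => |x i|) (mem_univ i)

lemma Mmax_le_iff {n : ℕ} (hn : 3 ≤ n) (x : Fin n → ℝ) (M : ℝ) :
    Mmax hn x ≤ M ↔ ∀ i, |x i| ≤ M :=
  ⟨fun h i => (abs_le_Mmax hn x i).trans h, fun h => sup'_le _ _ fun i _ => h i⟩

lemma card_add_card_lt_card_of_disjoint {ι : Type*} [Fintype ι] {P D : Finset ι} {i : ι}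
    (hP : i ∉ P) (hD : i ∉ D) (hPD : Disjoint P D) : #P + #D < Fintype.card ι := by
  rw [← card_disjUnion P D hPD]
  exact card_lt_univ_of_notMem (x := i) (by simp [hP, hD])

lemma abs_sum_le_card_mul {ι : Type*} (P : Finset ι) {x : ι → ℝ} {M : ℝ}
    (hx : ∀ j, |x j| ≤ M) : |∑ j ∈ P, x j| ≤ #P * M :=
  calc |∑ j ∈ P, x j| ≤ ∑ j ∈ P, |x j| := abs_sum_le_sum_abs _ _
    _ ≤ #P * M := by simpa using sum_le_card_nsmul P _ M fun j _ => hx j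

lemma mul_add_mul_le_one {a b α β p d m : ℝ} (ha : 0 ≤ a) (haα : a ≤ α) (hb : 0 ≤ b)
    (hbβ : b ≤ β) (hp : 0 ≤ p) (hd : 0 ≤ d) (hpd : p + d ≤ m) (hαβ : (α + β) * m ≤ 1) :
    a * p + b * d ≤ 1 := by
  nlinarith [mul_le_mul_of_nonneg_right haα hp, mul_le_mul_of_nonneg_right hbβ hd]

lemma mul_mem_Icc_of_eq_zero_or_one {α B : ℝ} (hα : 0 ≤ α) (hB : B = 0 ∨ B = 1) :
    α * B ∈ Set.Icc 0 α := by
  rcases hB with rfl | rfl <;> simp [hα]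

lemma abs_flip_update_le {ι : Type*} {x : ι → ℝ} {M a b : ℝ} (hx : ∀ j, |x j| ≤ M)
    (ha : 0 ≤ a) (hb : 0 ≤ b) (P D : Finset ι) (hPD : a * #P + b * #D ≤ 1) (i : ι) :
    |x i - a * ∑ j ∈ P, (x i - x j) - b * ∑ j ∈ D, (x i + x j)| ≤ M := by
  have hc : 0 ≤ 1 - a * #P - b * #D := by linarith
  have hrw : x i - a * ∑ j ∈ P, (x i - x j) - b * ∑ j ∈ D, (x i + x j)
      = (1 - a * #P - b * #D) * x i + a * ∑ j ∈ P, x j - b * ∑ j ∈ D, x j := by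
    simp only [sum_sub_distrib, sum_add_distrib, sum_const, nsmul_eq_mul]
    ring
  rw [hrw]
  calc _ ≤ |(1 - a * #P - b * #D) * x i| + |a * ∑ j ∈ P, x j| + |b * ∑ j ∈ D, x j| :=
        (abs_sub _ _).trans (add_le_add_left (abs_add_le _ _) _)
    _ ≤ (1 - a * #P - b * #D) * M + a * (#P * M) + b * (#D * M) := by
        simp only [abs_mul, abs_of_nonneg hc, abs_of_nonneg ha, abs_of_nonneg hb]
        gcongr
        exacts [hx i, abs_sum_le_card_mul P hx, abs_sum_le_card_mul D hx]
    _ = M := by ring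

/-- if `α + β ≤ 1/(n-1)`, then one step of the state-flipping update
is non-expansive for the maximum absolute state: `M(t+1) ≤ M(t)`. -/
theorem state_flipping_one_step_nonexpansive
    {n : ℕ} (hn : 3 ≤ n)
    (α β : ℝ) (hα : 0 < α) (hβ : 0 < β)
    (hαβ : α + β ≤ 1 / ((n : ℝ) - 1))
    (Np Nd : Fin n → Finset (Fin n))
    (hNp : ∀ i, i ∉ Np i) (hNd : ∀ i, i ∉ Nd i)
    (hdisj : ∀ i, Disjoint (Np i) (Nd i))
    (B D : ℝ) (hB : B = 0 ∨ B = 1) (hD : D = 0 ∨ D = 1)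
    (s s' : Fin n → ℝ)
    (hupd : ∀ i, s' i = s i - α * B * (∑ j ∈ Np i, (s i - s j))
        - β * D * (∑ j ∈ Nd i, (s i + s j))) :
    Mmax hn s' ≤ Mmax hn s := by
  have hn1 : (0 : ℝ) < n - 1 := by
    have : (3 : ℝ) ≤ n := by exact_mod_cast hn
    linarith
  have hαβ' : (α + β) * (n - 1) ≤ 1 := by rwa [le_div_iff₀ hn1] at hαβ
  obtain ⟨hαB, hαBα⟩ := mul_mem_Icc_of_eq_zero_or_one hα.le hB
  obtain ⟨hβD, hβDβ⟩ := mul_mem_Icc_of_eq_zero_or_one hβ.le hD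
  refine (Mmax_le_iff hn s' _).2 fun i => ?_
  have hcard : (#(Np i) : ℝ) + #(Nd i) ≤ n - 1 := by
    rw [le_sub_iff_add_le]
    exact_mod_cast (card_add_card_lt_card_of_disjoint (hNp i) (hNd i) (hdisj i)).trans_eq
      (Fintype.card_fin n)
  rw [hupd i]
  exact abs_flip_update_le (abs_le_Mmax hn s) hαB hβD (Np i) (Nd i)
    (mul_add_mul_le_one hαB hαBα hβD hβDβ (by positivity) (by positivity) hcard hαβ') i
end

section
/- Assume α + β ≤ 1/(n−1) and set γ_* = 1 − (α + β)(n−1). Then for every realization of the neighbor sets and attention values at times t, t+1, …, every node i ∈ V, and every k = 0, 1, 2, …, the (signed) state satisfies s_i(t+k) ≤ γ_*^k·s_i(t) + (1 − γ_*^k)·M(t). -/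
open Finset

lemma le_Mmax {n : ℕ} (hn : 3 ≤ n) (x : Fin n → ℝ) (j : Fin n) : |x j| ≤ Mmax hn x :=
  le_sup' (fun i => |x i|) (mem_univ j)

lemma Mmax_le {n : ℕ} (hn : 3 ≤ n) {x : Fin n → ℝ} {M : ℝ} (h : ∀ j, |x j| ≤ M) :
    Mmax hn x ≤ M :=
  sup'_le _ _ fun j _ => h j

lemma card_le_card_sub_one_of_notMem {ι : Type*} [Fintype ι] {F : Finset ι} {i : ι}
    (hi : i ∉ F) : (#F : ℝ) ≤ Fintype.card ι - 1 := by
  have : #F + 1 ≤ Fintype.card ι := card_lt_univ_of_notMem hi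
  have : (#F : ℝ) + 1 ≤ Fintype.card ι := by exact_mod_cast this
  linarith

lemma abs_smul_sum_sub_smul_sum_le {ι : Type*} {x : ι → ℝ} {M a e : ℝ} (P N : Finset ι)
    (ha : 0 ≤ a) (he : 0 ≤ e) (hx : ∀ j, |x j| ≤ M) :
    |a * ∑ j ∈ P, x j - e * ∑ j ∈ N, x j| ≤ (a * #P + e * #N) * M := by
  have hsum (S : Finset ι) : |∑ j ∈ S, x j| ≤ #S * M := by
    calc |∑ j ∈ S, x j| ≤ ∑ j ∈ S, |x j| := abs_sum_le_sum_abs _ _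
      _ ≤ #S • M := sum_le_card_nsmul _ _ _ fun j _ => hx j
      _ = #S * M := nsmul_eq_mul _ _
  calc |a * ∑ j ∈ P, x j - e * ∑ j ∈ N, x j|
      ≤ |a * ∑ j ∈ P, x j| + |e * ∑ j ∈ N, x j| := abs_sub _ _
    _ = a * |∑ j ∈ P, x j| + e * |∑ j ∈ N, x j| := by
        rw [abs_mul, abs_mul, abs_of_nonneg ha, abs_of_nonneg he]
    _ ≤ a * (#P * M) + e * (#N * M) := by gcongr <;> exact hsum _
    _ = (a * #P + e * #N) * M := by ring

lemma mul_add_le_convex_comb {c γ x r M : ℝ} (hγc : γ ≤ c) (hx : x ≤ M)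
    (hr : r ≤ (1 - c) * M) : c * x + r ≤ γ * x + (1 - γ) * M := by
  nlinarith [mul_nonneg (sub_nonneg.2 hγc) (sub_nonneg.2 hx)]

lemma abs_mul_add_le {c x r M : ℝ} (hc : 0 ≤ c) (hx : |x| ≤ M) (hr : |r| ≤ (1 - c) * M) :
    |c * x + r| ≤ M :=
  calc |c * x + r| ≤ c * |x| + |r| := by
        simpa [abs_mul, abs_of_nonneg hc] using abs_add_le (c * x) r
    _ ≤ c * M + (1 - c) * M := by gcongr
    _ = M := by ring

lemma le_geom_of_succ_le {γ : ℝ} (hγ0 : 0 ≤ γ) (hγ1 : γ ≤ 1) {y m : ℕ → ℝ}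
    (hm : ∀ k, m k ≤ m 0) (hy : ∀ k, y (k + 1) ≤ γ * y k + (1 - γ) * m k) (k : ℕ) :
    y k ≤ γ ^ k * y 0 + (1 - γ ^ k) * m 0 := by
  induction k with
  | zero => simp
  | succ k ih =>
    calc y (k + 1) ≤ γ * y k + (1 - γ) * m k := hy k
      _ ≤ γ * (γ ^ k * y 0 + (1 - γ ^ k) * m 0) + (1 - γ) * m 0 := by
          gcongr
          exact hm k
      _ = γ ^ (k + 1) * y 0 + (1 - γ ^ (k + 1)) * m 0 := by ring

namespace StateFlipping

variable {ι : Type*}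

def step (α β b d : ℝ) (P N : ι → Finset ι) (x : ι → ℝ) (i : ι) : ℝ :=
  x i - α * b * ∑ j ∈ P i, (x i - x j) - β * d * ∑ j ∈ N i, (x i + x j)

def selfWeight (α β b d : ℝ) (P N : ι → Finset ι) (i : ι) : ℝ :=
  1 - α * b * #(P i) - β * d * #(N i)

lemma step_eq (α β b d : ℝ) (P N : ι → Finset ι) (x : ι → ℝ) (i : ι) :
    step α β b d P N x i = selfWeight α β b d P N i * x i
      + (α * b * ∑ j ∈ P i, x j - β * d * ∑ j ∈ N i, x j) := by
  simp only [step, selfWeight, sum_sub_distrib, sum_add_distrib, sum_const, nsmul_eq_mul]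
  ring

variable {α β b d : ℝ} {P N : ι → Finset ι} {x : ι → ℝ} {M : ℝ}

lemma abs_neighbour_sums_le (hαb : 0 ≤ α * b) (hβd : 0 ≤ β * d) (hx : ∀ j, |x j| ≤ M)
    (i : ι) : |α * b * ∑ j ∈ P i, x j - β * d * ∑ j ∈ N i, x j|
      ≤ (1 - selfWeight α β b d P N i) * M := by
  convert abs_smul_sum_sub_smul_sum_le _ _ hαb hβd hx using 2
  simp only [selfWeight]
  ring

variable [Fintype ι]

lemma one_sub_mul_card_le_selfWeight (hα : 0 ≤ α) (hβ : 0 ≤ β)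
    (hb : b ∈ Set.Icc (0 : ℝ) 1) (hd : d ∈ Set.Icc (0 : ℝ) 1) {i : ι} (hPi : i ∉ P i)
    (hNi : i ∉ N i) :
    1 - (α + β) * (Fintype.card ι - 1) ≤ selfWeight α β b d P N i := by
  have hp := card_le_card_sub_one_of_notMem hPi
  have hq := card_le_card_sub_one_of_notMem hNi
  have hbp : b * #(P i) ≤ Fintype.card ι - 1 := by
    simpa using mul_le_mul hb.2 hp (Nat.cast_nonneg _) zero_le_one
  have hdq : d * #(N i) ≤ Fintype.card ι - 1 := by
    simpa using mul_le_mul hd.2 hq (Nat.cast_nonneg _) zero_le_one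
  rw [selfWeight]
  linarith [mul_le_mul_of_nonneg_left hbp hα, mul_le_mul_of_nonneg_left hdq hβ]

variable (hα : 0 ≤ α) (hβ : 0 ≤ β) (hb : b ∈ Set.Icc (0 : ℝ) 1)
  (hd : d ∈ Set.Icc (0 : ℝ) 1) (hP : ∀ i, i ∉ P i) (hN : ∀ i, i ∉ N i) (hx : ∀ j, |x j| ≤ M)
include hα hβ hb hd hP hN hx

lemma step_le (i : ι) :
    step α β b d P N x i ≤ (1 - (α + β) * (Fintype.card ι - 1)) * x i
      + (1 - (1 - (α + β) * (Fintype.card ι - 1))) * M := by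
  have hr :=
    abs_neighbour_sums_le (P := P) (N := N) (mul_nonneg hα hb.1) (mul_nonneg hβ hd.1) hx i
  rw [step_eq]
  exact mul_add_le_convex_comb (one_sub_mul_card_le_selfWeight hα hβ hb hd (hP i) (hN i))
    ((le_abs_self _).trans (hx i)) ((le_abs_self _).trans hr)

lemma abs_step_le (hγ : (α + β) * (Fintype.card ι - 1) ≤ 1) (i : ι) :
    |step α β b d P N x i| ≤ M := by
  rw [step_eq]
  refine abs_mul_add_le ?_ (hx i)
    (abs_neighbour_sums_le (mul_nonneg hα hb.1) (mul_nonneg hβ hd.1) hx i)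
  linarith [one_sub_mul_card_le_selfWeight hα hβ hb hd (hP i) (hN i)]

end StateFlipping

open StateFlipping

theorem state_flipping_signed_state_upper_bound_general
    {n : ℕ} (hn : 3 ≤ n)
    (α β : ℝ) (hα : 0 < α) (hβ : 0 < β)
    (hαβ : α + β ≤ 1 / ((n : ℝ) - 1))
    (Np Nd : ℕ → Fin n → Finset (Fin n))
    (hNp : ∀ t i, i ∉ Np t i) (hNd : ∀ t i, i ∉ Nd t i)
    (B D : ℕ → ℝ) (hB : ∀ t, B t = 0 ∨ B t = 1) (hD : ∀ t, D t = 0 ∨ D t = 1)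
    (s : ℕ → Fin n → ℝ)
    (hupd : ∀ t i, s (t + 1) i = s t i - α * B t * (∑ j ∈ Np t i, (s t i - s t j))
        - β * D t * (∑ j ∈ Nd t i, (s t i + s t j)))
    (t : ℕ) :
    ∀ (i : Fin n) (k : ℕ), s (t + k) i ≤
      (1 - (α + β) * ((n : ℝ) - 1)) ^ k * s t i
        + (1 - (1 - (α + β) * ((n : ℝ) - 1)) ^ k) * Mmax hn (s t) := by
  have hcard : (Fintype.card (Fin n) : ℝ) = n := by rw [Fintype.card_fin]
  have hn1 : (2 : ℝ) ≤ n - 1 := by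
    have : (3 : ℝ) ≤ n := by exact_mod_cast hn
    linarith
  have hγ : (α + β) * ((n : ℝ) - 1) ≤ 1 := (le_div_iff₀ (by linarith)).1 hαβ
  have hunit (c : ℝ) (hc : c = 0 ∨ c = 1) : c ∈ Set.Icc (0 : ℝ) 1 := by
    rcases hc with rfl | rfl <;> norm_num
  have hs (u : ℕ) : s (u + 1) = step α β (B u) (D u) (Np u) (Nd u) (s u) := funext (hupd u)
  have hdecay (u : ℕ) : Mmax hn (s (u + 1)) ≤ Mmax hn (s u) := by
    refine Mmax_le hn fun i => ?_
    rw [hs]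
    exact abs_step_le hα.le hβ.le (hunit _ (hB u)) (hunit _ (hD u)) (hNp u) (hNd u)
      (le_Mmax hn _) (by rwa [hcard]) i
  intro i k
  refine le_geom_of_succ_le (y := fun k => s (t + k) i) (m := fun k => Mmax hn (s (t + k)))
    (by linarith) (by nlinarith) (fun k => ?_) (fun k => ?_) k
  · exact antitone_nat_of_succ_le (f := fun k => Mmax hn (s (t + k))) (fun k => hdecay (t + k))
      k.zero_le
  · rw [← add_assoc, hs]
    simpa only [hcard] using step_le hα.le hβ.le (hunit _ (hB _)) (hunit _ (hD _)) (hNp _)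
      (hNd _) (le_Mmax hn _) i

/-- if `α + β ≤ 1/(n-1)` and `γ_* = 1 - (α+β)(n-1)`, then along every
realization of the state-flipping dynamics, every node `i` and every `k ≥ 0` satisfy
`s_i(t+k) ≤ γ_*^k·s_i(t) + (1 - γ_*^k)·M(t)`. -/
theorem state_flipping_signed_state_upper_bound
    {n : ℕ} (hn : 3 ≤ n)
    (α β : ℝ) (hα : 0 < α) (hβ : 0 < β)
    (hαβ : α + β ≤ 1 / ((n : ℝ) - 1))
    (Np Nd : ℕ → Fin n → Finset (Fin n))
    (hNp : ∀ t i, i ∉ Np t i) (hNd : ∀ t i, i ∉ Nd t i)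
    (hdisj : ∀ t i, Disjoint (Np t i) (Nd t i))
    (B D : ℕ → ℝ) (hB : ∀ t, B t = 0 ∨ B t = 1) (hD : ∀ t, D t = 0 ∨ D t = 1)
    (s : ℕ → Fin n → ℝ)
    (hupd : ∀ t i, s (t + 1) i = s t i - α * B t * (∑ j ∈ Np t i, (s t i - s t j))
        - β * D t * (∑ j ∈ Nd t i, (s t i + s t j)))
    (t : ℕ) :
    ∀ (i : Fin n) (k : ℕ), s (t + k) i ≤
      (1 - (α + β) * ((n : ℝ) - 1)) ^ k * s t i
        + (1 - (1 - (α + β) * ((n : ℝ) - 1)) ^ k) * Mmax hn (s t) :=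
  state_flipping_signed_state_upper_bound_general hn α β hα hβ hαβ Np Nd hNp hNd B D hB hD s hupd t
end

section
/- Assume α < 1/(4n), D_t = 1, and let 0 ≤ Z_1 < Z_2 satisfy n·Z_2 < 1/4 and β·Z_2 ≥ 2. Suppose there is a node i_1 with s_{i_1}(t) ∈ [(1 − Z_2)·M(t), (1 − Z_1)·M(t)] and a node j_* ∈ N_{i_1}^-(t) with s_{j_*}(t) ≥ −(1 − n·Z_2)·M(t). Then after one step of the state-flipping update, M(t+1) ≥ M(t)/2. -/
open Finset

section Bounds

variable {ι : Type*} [Fintype ι] {x : ι → ℝ} {M : ℝ}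

lemma neg_half_le_mul_sum_sub (hx : ∀ j, |x j| ≤ M) {a : ℝ} (ha : 0 ≤ a)
    (ha' : a * (4 * Fintype.card ι) ≤ 1) (i : ι) (S : Finset ι) :
    -(M / 2) ≤ a * ∑ j ∈ S, (x i - x j) := by
  have hM : 0 ≤ M := (abs_nonneg _).trans (hx i)
  have hterm : ∀ j ∈ S, -(2 * M) ≤ x i - x j := fun j _ => by
    linarith [neg_abs_le (x i), le_abs_self (x j), hx i, hx j]
  have hsum : -(#S * (2 * M)) ≤ ∑ j ∈ S, (x i - x j) := by
    simpa [nsmul_eq_mul] using card_nsmul_le_sum S _ _ hterm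
  have hcard : (#S : ℝ) ≤ Fintype.card ι := by exact_mod_cast card_le_univ S
  nlinarith [mul_le_mul_of_nonneg_left hsum ha, mul_le_mul_of_nonneg_right hcard hM]

lemma mul_le_sum_add_of_mem (hx : ∀ j, |x j| ≤ M) {Z : ℝ} (hZ : 0 ≤ Z) {i j : ι}
    {S : Finset ι} (hiS : i ∉ S) (hjS : j ∈ S) (hi : (1 - Z) * M ≤ x i)
    (hj : -(1 - Fintype.card ι * Z) * M ≤ x j) :
    Z * M ≤ ∑ k ∈ S, (x i + x k) := by
  have hM : 0 ≤ M := (abs_nonneg _).trans (hx i)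
  -- shifted by `Z * M`, every term is nonnegative, so the sum dominates its `j` term
  have hshift : x i + x j + Z * M ≤ ∑ k ∈ S, (x i + x k + Z * M) :=
    single_le_sum (f := fun k => x i + x k + Z * M)
      (fun k _ => by linarith [neg_abs_le (x k), hx k]) hjS
  have hcard : (#S : ℝ) + 1 ≤ Fintype.card ι := by
    exact_mod_cast card_lt_univ_of_notMem hiS
  rw [sum_add_distrib, sum_const, nsmul_eq_mul] at hshift
  nlinarith [mul_nonneg hZ hM]

end Bounds

theorem state_flipping_negative_kick_lower_bound_general
    {n : ℕ} (hn : 3 ≤ n)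
    (α β : ℝ) (hα : 0 < α) (hβ : 0 < β)
    (hα4n : α < 1 / (4 * (n : ℝ)))
    (Np Nd : Fin n → Finset (Fin n))
    (hNd : ∀ i, i ∉ Nd i)
    (B D : ℝ) (hB : B = 0 ∨ B = 1) (hD : D = 1)
    (Z₂ : ℝ)
    (hβZ₂ : β * Z₂ ≥ 2)
    (s s' : Fin n → ℝ)
    (i₁ : Fin n)
    (hi₁l : (1 - Z₂) * Mmax hn s ≤ s i₁)
    (jstar : Fin n) (hjstar : jstar ∈ Nd i₁)
    (hjs : -(1 - (n : ℝ) * Z₂) * Mmax hn s ≤ s jstar)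
    (hupd : ∀ i, s' i = s i - α * B * (∑ j ∈ Np i, (s i - s j))
        - β * D * (∑ j ∈ Nd i, (s i + s j))) :
    Mmax hn s / 2 ≤ Mmax hn s' := by
  subst hD
  set M := Mmax hn s
  have hs : ∀ j, |s j| ≤ M := abs_le_Mmax hn s
  have hM : 0 ≤ M := (abs_nonneg _).trans (hs i₁)
  have hZ₂ : 0 ≤ Z₂ := (pos_of_mul_pos_right (by linarith) hβ.le).le
  have hαB : 0 ≤ α * B ∧ α * B * (4 * n) ≤ 1 := by
    have h4n : α * (4 * n) < 1 := by rwa [lt_div_iff₀ (by positivity)] at hα4n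
    rcases hB with rfl | rfl <;> constructor <;> linarith
  have hattract := neg_half_le_mul_sum_sub hs hαB.1 (by simpa using hαB.2) i₁ (Np i₁)
  have hrepel := mul_le_sum_add_of_mem hs hZ₂ (hNd i₁) hjstar hi₁l (by simpa using hjs)
  have hkick : s' i₁ ≤ -(M / 2) := by
    rw [hupd, mul_one]
    nlinarith [le_abs_self (s i₁), hs i₁, mul_le_mul_of_nonneg_left hrepel hβ.le,
      mul_le_mul_of_nonneg_right hβZ₂ hM]
  calc M / 2 ≤ |s' i₁| := by linarith [neg_abs_le (s' i₁)]
    _ ≤ Mmax hn s' := abs_le_Mmax hn s' i₁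

/-- suppose `α < 1/(4n)`, `D_t = 1`, `0 ≤ Z₁ < Z₂`, `n·Z₂ < 1/4`,
`β·Z₂ ≥ 2`, there is a node `i₁` with `s_{i₁}(t) ∈ [(1-Z₂)M(t), (1-Z₁)M(t)]` and a
node `j_* ∈ N_{i₁}^-(t)` with `s_{j_*}(t) ≥ -(1 - n·Z₂)·M(t)`. Then `M(t+1) ≥ M(t)/2`. -/
theorem state_flipping_negative_kick_lower_bound
    {n : ℕ} (hn : 3 ≤ n)
    (α β : ℝ) (hα : 0 < α) (hβ : 0 < β)
    (hα4n : α < 1 / (4 * (n : ℝ)))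
    (Np Nd : Fin n → Finset (Fin n))
    (hNp : ∀ i, i ∉ Np i) (hNd : ∀ i, i ∉ Nd i)
    (hdisj : ∀ i, Disjoint (Np i) (Nd i))
    (B D : ℝ) (hB : B = 0 ∨ B = 1) (hD : D = 1)
    (Z₁ Z₂ : ℝ) (hZ₁ : 0 ≤ Z₁) (hZ₁₂ : Z₁ < Z₂)
    (hZ₂n : (n : ℝ) * Z₂ < 1 / 4) (hβZ₂ : β * Z₂ ≥ 2)
    (s s' : Fin n → ℝ)
    (i₁ : Fin n)
    (hi₁l : (1 - Z₂) * Mmax hn s ≤ s i₁) (hi₁u : s i₁ ≤ (1 - Z₁) * Mmax hn s)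
    (jstar : Fin n) (hjstar : jstar ∈ Nd i₁)
    (hjs : -(1 - (n : ℝ) * Z₂) * Mmax hn s ≤ s jstar)
    (hupd : ∀ i, s' i = s i - α * B * (∑ j ∈ Np i, (s i - s j))
        - β * D * (∑ j ∈ Nd i, (s i + s j))) :
    Mmax hn s / 2 ≤ Mmax hn s' :=
  state_flipping_negative_kick_lower_bound_general hn α β hα hβ hα4n Np Nd hNd B D hB hD Z₂ hβZ₂ s
    s' i₁ hi₁l jstar hjstar hjs hupd
end
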